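/- Let n ≥ 1 and let M be an n×n symmetric complex Hadamard matrix in dephased form such that M = P_σᵀ · F_n · P_ρ for some permutations σ, ρ of ℤ/nℤ. Then there exists a unit m of ℤ/nℤ such that M is spectrally equivalent to F_n · P_{(·m)}, i.e. the characteristic polynomial of M equals the characteristic polynomial of F_n · P_{(·m)}. -/

import Mathlib

open Matrix Complex

/-- The `n × n` Fourier matrix, with entries `F[j,k] = exp(2πi·jk/n)/√n`. -/
noncomputable def Fourier (n : ℕ) : Matrix (ZMod n) (ZMod n) ℂ :=
  Matrix.of fun j k =>
    ((1 / Real.sqrt n : ℝ) : ℂ) *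
      Complex.exp (2 * Real.pi * Complex.I * ((j.val : ℂ) * (k.val : ℂ)) / (n : ℂ))

/-- The permutation matrix of a map `σ`: `P[j,k] = 1` if `j = σ k`, else `0`. -/
def permMat {n : ℕ} (σ : ZMod n → ZMod n) : Matrix (ZMod n) (ZMod n) ℂ :=
  Matrix.of fun j k => if j = σ k then 1 else 0

/-- An `n × n` complex Hadamard matrix: unitary with all entries of absolute value `1/√n`. -/
def IsHadamard (n : ℕ) (H : Matrix (ZMod n) (ZMod n) ℂ) [NeZero n] : Prop :=
  H * Hᴴ = 1 ∧ Hᴴ * H = 1 ∧ ∀ i j, ‖H i j‖ = 1 / Real.sqrt n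

/-- Dephased form: all entries of the 0th row and 0th column equal `1/√n`. -/
def IsDephased (n : ℕ) (H : Matrix (ZMod n) (ZMod n) ℂ) : Prop :=
  (∀ j, H 0 j = ((1 / Real.sqrt n : ℝ) : ℂ)) ∧ (∀ i, H i 0 = ((1 / Real.sqrt n : ℝ) : ℂ))

/-!
The entry `F_n[a,b]` is `ζ^(ab)/√n` for a primitive `n`-th root of unity `ζ`, so it determines
the product `ab ∈ ℤ/nℤ`. Since `M[j,k] = F_n[σ j, ρ k]`, symmetry of `M` forces
`σ j · ρ k = σ k · ρ j`; taking `j = σ⁻¹ 1` gives `ρ = m · σ` with `m = ρ (σ⁻¹ 1)` a unit.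
Then `M = P_σᵀ (F_n P_{(·m)}) P_σ` is a simultaneous row and column permutation of
`F_n P_{(·m)}`, which does not change the characteristic polynomial.
-/

section PermMat

variable {n : ℕ} [NeZero n]

theorem transpose_permMat_mul_mul_permMat (A : Matrix (ZMod n) (ZMod n) ℂ)
    (σ ρ : ZMod n → ZMod n) : (permMat σ)ᵀ * A * permMat ρ = A.submatrix σ ρ := by
  ext j k
  simp [permMat, Matrix.mul_apply]

theorem mul_permMat (A : Matrix (ZMod n) (ZMod n) ℂ) (τ : ZMod n → ZMod n) :
    A * permMat τ = A.submatrix id τ := by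
  ext j k
  simp [permMat, Matrix.mul_apply]

end PermMat

theorem Fourier_apply_eq_pow {n : ℕ} (j k : ZMod n) :
    Fourier n j k = ((1 / Real.sqrt n : ℝ) : ℂ) *
      Complex.exp (2 * Real.pi * Complex.I / n) ^ (j.val * k.val) := by
  rw [Fourier, of_apply, ← Complex.exp_nat_mul]
  push_cast
  ring_nf

theorem Fourier_apply_eq_Fourier_apply_iff {n : ℕ} [NeZero n] {a b c d : ZMod n} :
    Fourier n a b = Fourier n c d ↔ a * b = c * d := by
  have hζ := Complex.isPrimitiveRoot_exp n (NeZero.ne n)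
  have hscale : ((1 / Real.sqrt n : ℝ) : ℂ) ≠ 0 := by
    have : (0 : ℝ) < n := Nat.cast_pos.mpr (Nat.pos_of_neZero n)
    exact Complex.ofReal_ne_zero.mpr (by positivity)
  rw [Fourier_apply_eq_pow, Fourier_apply_eq_pow, mul_right_inj' hscale,
    (hζ.isOfFinOrder (NeZero.ne n)).pow_eq_pow_iff_modEq, ← hζ.eq_orderOf,
    ← ZMod.natCast_eq_natCast_iff]
  push_cast [ZMod.natCast_val, ZMod.cast_id]
  rfl

theorem Equiv.Perm.exists_unit_mul_of_mul_comm {R : Type*} [CommMonoid R] (σ ρ : Equiv.Perm R)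
    (h : ∀ j k, σ j * ρ k = σ k * ρ j) : ∃ c : Rˣ, ∀ k, ρ k = c * σ k := by
  have hρ : ∀ k, ρ k = ρ (σ⁻¹ 1) * σ k := fun k => by
    simpa [mul_comm (σ k)] using h (σ⁻¹ 1) k
  have hunit : ρ (σ⁻¹ 1) * σ (ρ⁻¹ 1) = 1 := by simpa using (hρ (ρ⁻¹ 1)).symm
  exact ⟨Units.mkOfMulEqOne _ _ hunit, hρ⟩

theorem Matrix.charpoly_submatrix_equiv {ι R : Type*} [Fintype ι] [DecidableEq ι] [CommRing R]
    (A : Matrix ι ι R) (e : ι ≃ ι) : (A.submatrix e e).charpoly = A.charpoly :=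
  charpoly_reindex e.symm A

theorem symmetric_perm_fourier_spectrally_equivalent_general
    (n : ℕ) [NeZero n] (M : Matrix (ZMod n) (ZMod n) ℂ)
    (hsym : M = Mᵀ)
    (σ ρ : Equiv.Perm (ZMod n))
    (hM : M = (permMat σ)ᵀ * Fourier n * permMat ρ) :
    ∃ m : (ZMod n)ˣ,
      M.charpoly = (Fourier n * permMat fun k => (m : ZMod n) * k).charpoly := by
  rw [transpose_permMat_mul_mul_permMat] at hM
  have hprod : ∀ j k, σ j * ρ k = σ k * ρ j := fun j k => by
    have hjk : M j k = M k j := congrFun₂ hsym j k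
    simpa [hM, Fourier_apply_eq_Fourier_apply_iff] using hjk
  obtain ⟨m, hm⟩ := σ.exists_unit_mul_of_mul_comm ρ hprod
  refine ⟨m, ?_⟩
  have hρ : ⇑ρ = (fun k => (m : ZMod n) * k) ∘ σ := funext hm
  rw [hM, mul_permMat, ← charpoly_submatrix_equiv ((Fourier n).submatrix id _) σ,
    submatrix_submatrix, Function.id_comp, hρ]

theorem symmetric_perm_fourier_spectrally_equivalent
    (n : ℕ) [NeZero n] (M : Matrix (ZMod n) (ZMod n) ℂ)
    (hH : IsHadamard n M) (hd : IsDephased n M) (hsym : M = Mᵀ)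
    (σ ρ : Equiv.Perm (ZMod n))
    (hM : M = (permMat σ)ᵀ * Fourier n * permMat ρ) :
    ∃ m : (ZMod n)ˣ,
      M.charpoly = (Fourier n * permMat fun k => (m : ZMod n) * k).charpoly :=
  symmetric_perm_fourier_spectrally_equivalent_general n M hsym σ ρ hM
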